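/- arXiv:math/0305035 — 5 statements merged into one kernel-verified Lean document; each statement's English description precedes it below -/
import Mathlib

section
/- Let p be a prime, G a finite p-group, and χ an irreducible complex character of G. Suppose Z and Y are subgroups of G with Z < Y, Y normal in G, and the index |Y : Z| = p. If Z ≤ Z(χ) and Y is not contained in Z(χ), then χ vanishes on Y \ Z, i.e., χ(y) = 0 for all y ∈ Y with y ∉ Z. -/
open scoped ComplexOrder

/-- `χ` is the character of some finite-dimensional complex representation of `G`. -/
def IsChar (G : Type) [Group G] (χ : G → ℂ) : Prop :=
  ∃ V : FDRep ℂ G, V.character = χ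

/-- `χ` is an irreducible complex character of `G`, i.e. the character of some
simple finite-dimensional complex representation of `G`. -/
def IsIrrChar (G : Type) [Group G] (χ : G → ℂ) : Prop :=
  ∃ V : FDRep ℂ G, CategoryTheory.Simple V ∧ V.character = χ

/-- The standard inner product of complex class functions on a finite group. -/
noncomputable def charInner (G : Type) [Group G] [Fintype G] (f h : G → ℂ) : ℂ :=
  (Fintype.card G : ℂ)⁻¹ * ∑ g : G, f g * starRingEnd ℂ (h g)

/-- `η(χ,ψ)`: the number of distinct irreducible characters occurring as
constituents of the product character `χψ`. -/
noncomputable def eta (G : Type) [Group G] [Fintype G] (χ ψ : G → ℂ) : ℕ :=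
  {θ : G → ℂ | IsIrrChar G θ ∧ 0 < charInner G (fun g => χ g * ψ g) θ}.ncard

/-- A character is faithful if its kernel `{g | χ g = χ 1}` is trivial. -/
def IsFaithfulChar (G : Type) [Group G] (χ : G → ℂ) : Prop :=
  ∀ g : G, χ g = χ 1 → g = 1

/-- The center `Z(χ) = {g | |χ(g)| = χ(1)}` of a character. -/
def charCenter (G : Type) [Group G] (χ : G → ℂ) : Set G :=
  {g | ((‖χ g‖ : ℝ) : ℂ) = χ 1}

/-!
Write `χ` as the character of a simple representation `ρ`. The eigenvalues of `ρ g` are roots of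
unity and `χ g` is their sum, so `|χ g| = χ 1` forces them all to be equal; as `ρ g` has finite
order it is diagonalizable, hence scalar. Conversely, by Schur's lemma, `ρ g` is scalar as soon as
it commutes with `ρ(G)`. So `Z(χ) = ρ⁻¹(Z(ρ(G)))` is a normal subgroup, and `|Y : Z| = p` forces
`Z(χ) ∩ Y = Z`; in particular `Z ⊴ G`. Now `Y/Z` is a normal subgroup of order `p` of the `p`-group
`G/Z`, hence central, so for `y ∈ Y \ Z` and any `g` we have `g y g⁻¹ = y z` with `z ∈ Z`, and
`ρ z = c` is a scalar. Then `χ y = χ (y z) = c χ y`. Since `y ∉ Z(χ)`, some `ρ g` does not commute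
with `ρ y`; for this `g` we get `c ≠ 1`, hence `χ y = 0`.
-/

open Module CategoryTheory

theorem Multiset.eq_smul_sum_of_norm_sum_eq_card {E : Type*} [NormedAddCommGroup E]
    [InnerProductSpace ℝ E] {s : Multiset E} (hs : ∀ w ∈ s, ‖w‖ = 1)
    (hsum : ‖s.sum‖ = card s) {z : E} (hz : z ∈ s) :
    z = (card s : ℝ)⁻¹ • s.sum := by
  set c := (card s : ℝ)⁻¹ • s.sum
  have hn : (card s : ℝ) ≠ 0 := by exact_mod_cast (card_pos_iff_exists_mem.2 ⟨z, hz⟩).ne'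
  have hc : ‖c‖ = 1 := by simp [c, norm_smul, hsum, hn]
  have hle : ∀ w ∈ s, inner ℝ c w ≤ 1 := fun w hw =>
    (real_inner_le_norm c w).trans_eq (by rw [hc, hs w hw, one_mul])
  have hinner : (s.map (inner ℝ c)).sum = card s := by
    rw [← show inner ℝ c s.sum = (s.map (inner ℝ c)).sum from map_multiset_sum (innerSL ℝ c) s,
      show s.sum = (card s : ℝ) • c by simp [c, smul_smul, hn],
      real_inner_smul_right, real_inner_self_eq_norm_sq, hc]
    ring
  have hzc : inner ℝ c z = 1 := by
    by_contra hne
    have := Multiset.sum_lt_sum hle ⟨z, hz, (hle z hz).lt_of_ne hne⟩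
    simp [hinner] at this
  refine eq_of_norm_le_re_inner_eq_norm_sq (𝕜 := ℝ) (hs z hz ▸ hc.ge) ?_
  rw [RCLike.re_to_real, real_inner_comm, hzc, hc, one_pow]

theorem Module.End.HasEigenvalue.pow_eq_one {K W : Type*} [Field K] [AddCommGroup W] [Module K W]
    {A : End K W} {m : ℕ} (hA : A ^ m = 1) {μ : K} (hμ : A.HasEigenvalue μ) : μ ^ m = 1 := by
  obtain ⟨v, hv⟩ := hμ.exists_hasEigenvector
  have hv' := hv.pow_apply m
  rw [hA, End.one_apply] at hv'
  exact smul_left_injective K hv.2 (show μ ^ m • v = (1 : K) • v by rw [← hv', one_smul])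

theorem Module.End.isSemisimple_of_pow_eq_one {K W : Type*} [Field K] [AddCommGroup W] [Module K W]
    {A : End K W} {m : ℕ} (hm : (m : K) ≠ 0) (hA : A ^ m = 1) : A.IsSemisimple :=
  isSemisimple_of_squarefree_aeval_eq_zero
    (Polynomial.separable_X_pow_sub_C 1 hm one_ne_zero).squarefree (by simp [hA])

theorem Module.End.eq_smul_one_of_norm_trace_eq_finrank {W : Type*} [AddCommGroup W] [Module ℂ W]
    [FiniteDimensional ℂ W] {A : End ℂ W} {m : ℕ} (hm : m ≠ 0) (hA : A ^ m = 1)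
    (htr : ‖LinearMap.trace ℂ W A‖ = finrank ℂ W) :
    A = ((finrank ℂ W : ℂ)⁻¹ * LinearMap.trace ℂ W A) • 1 := by
  set c := (finrank ℂ W : ℂ)⁻¹ * LinearMap.trace ℂ W A
  have hsplits : A.charpoly.Splits := IsAlgClosed.splits _
  have hcard : Multiset.card A.charpoly.roots = finrank ℂ W := by
    rw [Polynomial.splits_iff_card_roots.1 hsplits, LinearMap.charpoly_natDegree]
  have htrace : LinearMap.trace ℂ W A = A.charpoly.roots.sum :=
    trace_eq_sum_roots_charpoly_of_splits hsplits
  have hmem : ∀ μ, μ ∈ A.charpoly.roots ↔ A.HasEigenvalue μ := fun μ => by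
    rw [Polynomial.mem_roots A.charpoly_monic.ne_zero, hasEigenvalue_iff_isRoot_charpoly]
  have hnorm : ∀ μ ∈ A.charpoly.roots, ‖μ‖ = 1 := fun μ hμ =>
    Complex.norm_eq_one_of_pow_eq_one (((hmem μ).1 hμ).pow_eq_one hA) hm
  have hroots : ∀ μ, A.HasEigenvalue μ → μ = c := by
    intro μ hμ
    rw [Multiset.eq_smul_sum_of_norm_sum_eq_card hnorm (by rw [← htrace, htr, hcard])
      ((hmem μ).2 hμ), ← htrace, hcard, Complex.real_smul]
    push_cast
    rfl
  have hss : (A - c • 1).IsSemisimple := by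
    rw [← Algebra.algebraMap_eq_smul_one, isSemisimple_sub_algebraMap_iff]
    exact isSemisimple_of_pow_eq_one (by exact_mod_cast hm) hA
  rw [← sub_eq_zero, hss.eq_zero_iff_forall_eigenvalue]
  intro ν hν
  rw [End.one_eq_id, hasEigenvalue_sub_iff] at hν
  simpa using hroots _ hν

theorem Subgroup.eq_or_eq_of_relIndex_prime {G : Type*} [Group G] {Z H Y : Subgroup G}
    (hZH : Z ≤ H) (hHY : H ≤ Y) (hp : (Z.relIndex Y).Prime) : H = Z ∨ H = Y := by
  rw [← relIndex_mul_relIndex Z H Y hZH hHY, Nat.prime_mul_iff] at hp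
  rcases hp with ⟨-, h⟩ | ⟨-, h⟩
  · exact .inr (le_antisymm hHY (relIndex_eq_one.1 h))
  · exact .inl (le_antisymm (relIndex_eq_one.1 h) hZH)

theorem IsPGroup.le_center_of_card_eq {p : ℕ} [Fact p.Prime] {G : Type*} [Group G] [Finite G]
    (hG : IsPGroup p G) {N : Subgroup G} [N.Normal] (hN : Nat.card N = p) :
    N ≤ Subgroup.center G := by
  set F := MulAction.fixedPoints (ConjAct G) N
  have hmod : Nat.card N ≡ Nat.card F [MOD p] :=
    (hG.of_equiv ConjAct.toConjAct).card_modEq_card_fixedPoints N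
  have hpos : 0 < Nat.card F := Nat.card_pos_iff.2 ⟨⟨⟨1, fun g => smul_one g⟩⟩, inferInstance⟩
  have hdvd : p ∣ Nat.card F :=
    Nat.modEq_zero_iff_dvd.1 (hmod.symm.trans (hN ▸ Nat.modEq_zero_iff_dvd.2 dvd_rfl))
  have hF : ∀ n : N, n ∈ F := fun n => by_contra fun h =>
    (Finite.card_subtype_lt h).not_ge (hN ▸ Nat.le_of_dvd hpos hdvd)
  intro n hn
  rw [Subgroup.mem_center_iff]
  intro g
  have hconj := congrArg Subtype.val (hF ⟨n, hn⟩ (ConjAct.toConjAct g))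
  rw [ConjAct.Subgroup.val_conj_smul, ConjAct.smul_def, ConjAct.ofConjAct_toConjAct] at hconj
  exact mul_inv_eq_iff_eq_mul.1 hconj

theorem IsPGroup.inv_mul_conj_mem_of_relIndex_eq {p : ℕ} [Fact p.Prime] {G : Type*} [Group G]
    [Finite G] (hG : IsPGroup p G) {Z Y : Subgroup G} [Z.Normal] (hY : Y.Normal)
    (hidx : Z.relIndex Y = p) (g : G) {y : G} (hy : y ∈ Y) : y⁻¹ * (g * y * g⁻¹) ∈ Z := by
  have : (Y.map (QuotientGroup.mk' Z)).Normal := hY.map _ (QuotientGroup.mk'_surjective Z)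
  have hcard : Nat.card (Y.map (QuotientGroup.mk' Z)) = p := by
    rw [← Subgroup.relIndex_ker, QuotientGroup.ker_mk', hidx]
  have hcent := (hG.to_quotient Z).le_center_of_card_eq hcard ⟨y, hy, rfl⟩
  rw [QuotientGroup.mk'_apply, Subgroup.mem_center_iff] at hcent
  rw [← QuotientGroup.eq, QuotientGroup.mk_mul, QuotientGroup.mk_mul, QuotientGroup.mk_inv, hcent,
    mul_inv_cancel_right]

namespace FDRep
variable {G : Type} [Group G]

noncomputable def center (V : FDRep ℂ G) : Subgroup G :=
  (Subgroup.centralizer (Set.range (Representation.asGroupHom V.ρ))).comap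
    (Representation.asGroupHom V.ρ)

theorem mem_center_iff {V : FDRep ℂ G} {g : G} :
    g ∈ V.center ↔ ∀ h, Commute (V.ρ h) (V.ρ g) := by
  simp only [center, Subgroup.mem_comap, Subgroup.mem_centralizer_iff, Set.forall_mem_range,
    Units.ext_iff, Units.val_mul, Representation.asGroupHom_apply, commute_iff_eq]

instance (V : FDRep ℂ G) : V.center.Normal where
  conj_mem g hg k := by
    have hcomm := mem_center_iff.1 hg
    have hconj : V.ρ (k * g * k⁻¹) = V.ρ g := by
      rw [map_mul, map_mul, (hcomm k).eq, mul_assoc, ← map_mul, mul_inv_cancel, map_one, mul_one]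
    exact mem_center_iff.2 fun h => hconj ▸ hcomm h

theorem exists_eq_smul_one_of_mem_center {V : FDRep ℂ G} [Simple V] {g : G}
    (hg : g ∈ V.center) :
    ∃ c : ℂ, V.ρ g = c • 1 := by
  let f : V ⟶ V := ⟨InducedCategory.homMk (ModuleCat.ofHom (V.ρ g)), fun h =>
    InducedCategory.hom_ext (ModuleCat.hom_ext (mem_center_iff.1 hg h).eq.symm)⟩
  obtain ⟨c, hc⟩ := endomorphism_simple_eq_smul_id ℂ f
  exact ⟨c, congrArg (fun φ : V ⟶ V => φ.hom.hom.hom) hc.symm⟩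

theorem mem_center_of_eq_smul_one {V : FDRep ℂ G} {g : G} {c : ℂ} (hc : V.ρ g = c • 1) :
    g ∈ V.center :=
  mem_center_iff.2 fun _ => hc ▸ (Commute.one_right _).smul_right c

theorem character_eq_zero_of_conj_eq_smul (V : FDRep ℂ G) {g y : G} {c : ℂ}
    (hc : V.ρ (g * y * g⁻¹) = c • V.ρ y) (hgy : ¬Commute (V.ρ g) (V.ρ y)) :
    V.character y = 0 := by
  have hc1 : c ≠ 1 := by
    rintro rfl
    rw [one_smul] at hc
    refine hgy ?_
    calc V.ρ g * V.ρ y = V.ρ (g * y * g⁻¹ * g) := by rw [inv_mul_cancel_right, map_mul]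
      _ = V.ρ y * V.ρ g := by rw [map_mul, hc]
  have h : V.character y = c * V.character y :=
    calc V.character y = V.character (g * y * g⁻¹) := (char_conj V y g).symm
      _ = c * V.character y := by rw [character, hc, map_smul, smul_eq_mul]; rfl
  have h' : (1 - c) * V.character y = 0 := by linear_combination h
  exact (mul_eq_zero.1 h').resolve_left (sub_ne_zero.2 hc1.symm)

variable [Fintype G]

theorem ρ_pow_card_eq_one (V : FDRep ℂ G) (g : G) : V.ρ g ^ Fintype.card G = 1 := by
  rw [← map_pow, pow_card_eq_one, map_one]

theorem norm_character_eq_finrank_iff (V : FDRep ℂ G) (g : G) :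
    ‖V.character g‖ = finrank ℂ V ↔ ∃ c : ℂ, V.ρ g = c • 1 := by
  constructor
  · exact fun h => ⟨_, End.eq_smul_one_of_norm_trace_eq_finrank Fintype.card_ne_zero
      (ρ_pow_card_eq_one V g) h⟩
  · rintro ⟨c, hc⟩
    have hχ : V.character g = c * finrank ℂ V := by
      rw [character, hc, map_smul, LinearMap.trace_one, smul_eq_mul]
    rcases subsingleton_or_nontrivial V with hV | hV
    · simp [hχ, finrank_zero_of_subsingleton]
    obtain ⟨v, hv⟩ := exists_ne (0 : V)
    have hcv : End.HasEigenvector (V.ρ g) c v := ⟨End.mem_eigenspace_iff.2 (by simp [hc]), hv⟩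
    have hc1 : ‖c‖ = 1 := Complex.norm_eq_one_of_pow_eq_one
      ((End.hasEigenvalue_of_hasEigenvector hcv).pow_eq_one (ρ_pow_card_eq_one V g))
      Fintype.card_ne_zero
    rw [hχ, norm_mul, hc1, one_mul, Complex.norm_natCast]

theorem coe_center_eq_charCenter (V : FDRep ℂ G) [Simple V] :
    (V.center : Set G) = charCenter G V.character := by
  ext g
  rw [SetLike.mem_coe, charCenter, Set.mem_ofPred_eq, char_one, ← Complex.ofReal_natCast,
    Complex.ofReal_inj, norm_character_eq_finrank_iff]
  exact ⟨exists_eq_smul_one_of_mem_center, fun ⟨_, hc⟩ => mem_center_of_eq_smul_one hc⟩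

end FDRep

/-- Lemma 2.2: if Z < Y ≤ G with Y ⊴ G, |Y:Z| = p, Z ≤ Z(χ) and Y ⊄ Z(χ),
then χ vanishes on Y \ Z. -/
theorem stmt6 {p : ℕ} (hp : p.Prime) (G : Type) [Group G] [Fintype G]
    (hG : IsPGroup p G) (χ : G → ℂ) (hχ : IsIrrChar G χ)
    (Z Y : Subgroup G) (hZY : Z < Y) (hY : Y.Normal)
    (hidx : Z.relIndex Y = p)
    (hZc : (Z : Set G) ⊆ charCenter G χ)
    (hYc : ¬ (Y : Set G) ⊆ charCenter G χ) :
    ∀ y ∈ Y, y ∉ Z → χ y = 0 := by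
  obtain ⟨V, _, rfl⟩ := hχ
  have : Fact p.Prime := ⟨hp⟩
  intro y hyY hyZ
  rw [← V.coe_center_eq_charCenter, SetLike.coe_subset_coe] at hZc hYc
  have hZK : Z ≤ V.center ⊓ Y := le_inf hZc hZY.le
  have hKZ : V.center ⊓ Y = Z :=
    (Subgroup.eq_or_eq_of_relIndex_prime hZK inf_le_right (hidx ▸ hp)).resolve_right
      fun h => hYc (h ▸ inf_le_left)
  have : Z.Normal := hKZ ▸ inferInstance
  obtain ⟨g, hg⟩ : ∃ g, ¬Commute (V.ρ g) (V.ρ y) := by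
    by_contra! h
    exact hyZ (hKZ ▸ ⟨FDRep.mem_center_iff.2 h, hyY⟩)
  obtain ⟨c, hc⟩ := FDRep.exists_eq_smul_one_of_mem_center
    (hKZ.ge (hG.inv_mul_conj_mem_of_relIndex_eq hY hidx g hyY)).1
  refine V.character_eq_zero_of_conj_eq_smul (c := c) ?_ hg
  rw [← mul_inv_cancel_left y (g * y * g⁻¹), map_mul, hc, mul_smul_comm, mul_one]
end

section
/- Let G be a finite group with center Z = Z(G), and let χ and ψ be irreducible complex characters of G, both of which vanish on G \ Z. Let λ and μ be the unique linear characters of Z with χ restricted to Z equal to χ(1)·λ and ψ restricted to Z equal to ψ(1)·μ. Then the product character χψ equals the induced character (λμ)^G. -/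
open scoped ComplexOrder

open Classical in
/-- The character of G induced from a class function f on a subgroup H. -/
noncomputable def inducedChar (G : Type) [Group G] [Fintype G] (H : Subgroup G)
    (f : ↥H → ℂ) : G → ℂ :=
  fun g => (Nat.card ↥H : ℂ)⁻¹ *
    ∑ x : G, if h : x⁻¹ * g * x ∈ H then f ⟨x⁻¹ * g * x, h⟩ else 0

/-!
Orthogonality gives `∑ g, χ g * χ g⁻¹ = |G|` for irreducible `χ`; when `χ` vanishes off `Z` and
equals `χ 1 • λ` on `Z`, every term of the sum is `0` or `χ(1)²`, so `χ(1)² |Z| = |G|`. Hence `χ` and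
`ψ` have the same degree and `χψ` is `(|G| / |Z|) λμ` on `Z` and `0` off `Z`, which is exactly the
value of `(λμ)^G`, since conjugation fixes `Z` pointwise and preserves `G \ Z`.
-/

section InducedChar

variable {G : Type} [Group G] [Fintype G]

lemma inducedChar_eq_zero_of_notMem (H : Subgroup G) [H.Normal] (f : H → ℂ) {g : G}
    (hg : g ∉ H) : inducedChar G H f g = 0 := by
  have hconj (x : G) : x⁻¹ * g * x ∉ H := fun h ↦
    hg (by simpa [mul_assoc] using ‹H.Normal›.conj_mem _ h x)
  simp [inducedChar, hconj]

lemma inducedChar_apply_of_mem_center (H : Subgroup G) (f : H → ℂ) {g : G} (hgH : g ∈ H)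
    (hgZ : g ∈ Subgroup.center G) :
    inducedChar G H f g = (Nat.card G : ℂ) / Nat.card H * f ⟨g, hgH⟩ := by
  classical
  have hconj (x : G) : x⁻¹ * g * x = g := by
    rw [mul_assoc, ← Subgroup.mem_center_iff.mp hgZ x, inv_mul_cancel_left]
  have hterm (x : G) :
      (if h : x⁻¹ * g * x ∈ H then f ⟨x⁻¹ * g * x, h⟩ else 0) = f ⟨g, hgH⟩ := by
    simp only [hconj, dif_pos hgH]
  simp only [inducedChar, hterm, Finset.sum_const, Finset.card_univ, nsmul_eq_mul,
    Nat.card_eq_fintype_card]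
  ring

end InducedChar

lemma IsIrrChar.exists_apply_one_eq_natCast {G : Type} [Group G] {χ : G → ℂ}
    (hχ : IsIrrChar G χ) : ∃ n : ℕ, χ 1 = n := by
  obtain ⟨V, -, rfl⟩ := hχ
  exact ⟨_, FDRep.char_one V⟩

section IrrChar

variable {G : Type} [Group G] [Fintype G] {χ : G → ℂ}

lemma IsIrrChar.sum_mul_apply_inv (hχ : IsIrrChar G χ) :
    ∑ g : G, χ g * χ g⁻¹ = Nat.card G := by
  obtain ⟨V, hV, rfl⟩ := hχ
  have hG : (Nat.card G : ℂ) ≠ 0 := by exact_mod_cast Nat.card_pos.ne'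
  have h := FDRep.char_orthonormal V V
  rwa [if_pos ⟨CategoryTheory.Iso.refl V⟩, inv_mul_eq_iff_eq_mul₀ hG, mul_one] at h

lemma IsIrrChar.apply_one_sq_mul_card (hχ : IsIrrChar G χ) (H : Subgroup G)
    (hχv : ∀ g ∉ H, χ g = 0) (lam : H →* ℂ) (hlam : ∀ h : H, χ h = χ 1 * lam h) :
    χ 1 ^ 2 * Nat.card H = Nat.card G := by
  classical
  have hterm (g : G) : χ g * χ g⁻¹ = if g ∈ H then χ 1 ^ 2 else 0 := by
    split_ifs with hg
    · have hlam_inv : lam ⟨g, hg⟩ * lam ⟨g⁻¹, inv_mem hg⟩ = 1 :=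
        map_mul_eq_one lam (Subtype.ext (mul_inv_cancel g))
      rw [hlam ⟨g, hg⟩, hlam ⟨g⁻¹, inv_mem hg⟩, mul_mul_mul_comm, hlam_inv]
      ring
    · rw [hχv g hg, zero_mul]
  rw [← hχ.sum_mul_apply_inv, Finset.sum_congr rfl fun g _ ↦ hterm g, ← Finset.sum_filter,
    Finset.sum_const, nsmul_eq_mul, mul_comm, Nat.card_eq_fintype_card, Fintype.card_subtype]

end IrrChar

/-- If the irreducible characters χ and ψ both vanish outside the center Z, with
central characters λ and μ, then χψ is the character induced from λμ. -/
theorem stmt11 (G : Type) [Group G] [Fintype G]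
    (χ ψ : G → ℂ) (hχ : IsIrrChar G χ) (hψ : IsIrrChar G ψ)
    (hχv : ∀ g : G, g ∉ Subgroup.center G → χ g = 0)
    (hψv : ∀ g : G, g ∉ Subgroup.center G → ψ g = 0)
    (lam mu : ↥(Subgroup.center G) →* ℂ)
    (hlam : ∀ z : ↥(Subgroup.center G), χ ↑z = χ 1 * lam z)
    (hmu : ∀ z : ↥(Subgroup.center G), ψ ↑z = ψ 1 * mu z) :
    ∀ g : G, χ g * ψ g = inducedChar G (Subgroup.center G) (fun z => lam z * mu z) g := by
  have hZ : (Nat.card (Subgroup.center G) : ℂ) ≠ 0 := by exact_mod_cast Nat.card_pos.ne'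
  have hχdeg := hχ.apply_one_sq_mul_card _ hχv lam hlam
  have hψdeg := hψ.apply_one_sq_mul_card _ hψv mu hmu
  have hdeg : χ 1 = ψ 1 := by
    obtain ⟨m, hm⟩ := hχ.exists_apply_one_eq_natCast
    obtain ⟨n, hn⟩ := hψ.exists_apply_one_eq_natCast
    have hsq : m ^ 2 = n ^ 2 := by
      rw [← Nat.cast_inj (R := ℂ), Nat.cast_pow, Nat.cast_pow, ← hm, ← hn]
      exact mul_right_cancel₀ hZ (hχdeg.trans hψdeg.symm)
    rw [hm, hn, Nat.pow_left_injective two_ne_zero hsq]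
  intro g
  by_cases hg : g ∈ Subgroup.center G
  · rw [inducedChar_apply_of_mem_center _ _ hg hg, hlam ⟨g, hg⟩, hmu ⟨g, hg⟩, ← hdeg, ← hχdeg]
    field_simp
  · rw [inducedChar_eq_zero_of_notMem _ _ hg, hχv g hg, zero_mul]
end

section
/- Let p be a prime and G a finite p-group whose center Z = Z(G) is cyclic and a proper subgroup of G. Let Y be a normal subgroup of G with Z < Y and |Y : Z| = p. Then Y is abelian, the centralizer H = C_G(Y) is a normal subgroup of index p in G, and for every g ∈ G \ H and every y ∈ Y \ Z, the commutator [g,y] is a nontrivial element of the unique subgroup of order p of Z. -/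
/-!
Modulo `Z`, the image of `Y` is a normal subgroup of order `p` of the `p`-group `G / Z`, hence
central there; so every commutator `[g, y]` with `y ∈ Y` lies in `Z`. For `y ∈ Y \ Z` we have
`Y = Z ⟨y⟩`, so `C_G(Y) = C_G(y)` and `Y` is abelian. Then `g ↦ [g, y]` is a homomorphism
`G → Z` with kernel `C_G(y)` whose values satisfy `[g, y] ^ p = [g, y ^ p] = 1`; as `Z` is
cyclic, its image is the subgroup of order `p` of `Z`, which gives the index.
-/

open Subgroup

theorem IsPGroup.le_center_of_card_eq_prime {p : ℕ} [Fact p.Prime] {G : Type*} [Group G]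
    [Finite G] (hG : IsPGroup p G) (K : Subgroup G) [K.Normal] (hK : Nat.card K = p) :
    K ≤ center G := by
  -- the conjugation action fixes `1`, so it fixes some `b ≠ 1`, which generates `K`
  obtain ⟨b, hb, hb1⟩ := (hG.of_equiv ConjAct.toConjAct)
    |>.exists_fixed_point_of_prime_dvd_card_of_fixed_point K (hK ▸ dvd_rfl) (a := 1) (smul_one ·)
  have hbc : (b : G) ∈ center G := by
    refine mem_center_iff.mpr fun g => ?_
    have := congrArg Subtype.val (hb (ConjAct.toConjAct g))
    rw [ConjAct.Subgroup.val_conj_smul, ConjAct.toConjAct_smul] at this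
    exact mul_inv_eq_iff_eq_mul.mp this
  intro k hk
  obtain ⟨n, hn⟩ := mem_zpowers_iff.mp
    ((zpowers_eq_top_of_prime_card hK (Ne.symm hb1)).symm ▸ mem_top (⟨k, hk⟩ : K))
  rw [← show ((b ^ n : K) : G) = k from congrArg Subtype.val hn, coe_zpow]
  exact zpow_mem hbc n

section

variable {G : Type*} [Group G]

theorem card_map_mk'_eq_relIndex {N Y : Subgroup G} [N.Normal] (hNY : N ≤ Y) :
    Nat.card (Y.map (QuotientGroup.mk' N)) = N.relIndex Y := by
  rw [← relIndex_bot_left, ← QuotientGroup.map_mk'_self N, relIndex_map_map,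
    QuotientGroup.ker_mk', sup_idem, sup_of_le_left hNY]

theorem IsPGroup.commutator_mem_of_relIndex_eq_prime {p : ℕ} [Fact p.Prime] [Finite G]
    (hG : IsPGroup p G) {N Y : Subgroup G} [N.Normal] [Y.Normal] (hNY : N ≤ Y)
    (hidx : N.relIndex Y = p) (g : G) {y : G} (hy : y ∈ Y) : g⁻¹ * y⁻¹ * g * y ∈ N := by
  have hcentral := (hG.to_quotient N).le_center_of_card_eq_prime (Y.map (QuotientGroup.mk' N))
    ((card_map_mk'_eq_relIndex hNY).trans hidx) (mem_map_of_mem _ hy)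
  have hcomm : (g : G ⧸ N) * y = y * g := mem_center_iff.mp hcentral g
  rw [← QuotientGroup.eq_one_iff, QuotientGroup.mk_mul, QuotientGroup.mk_mul, QuotientGroup.mk_mul,
    QuotientGroup.mk_inv, QuotientGroup.mk_inv, mul_assoc, hcomm]
  group

theorem sup_zpowers_eq_of_relIndex_prime {N Y : Subgroup G} (hNY : N ≤ Y)
    (hidx : (N.relIndex Y).Prime) {y : G} (hy : y ∈ Y) (hyN : y ∉ N) :
    N ⊔ zpowers y = Y := by
  set K := N ⊔ zpowers y
  have hNK : N ≤ K := le_sup_left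
  have hKY : K ≤ Y := sup_le hNY (zpowers_le.mpr hy)
  refine le_antisymm hKY (relIndex_eq_one.mp ?_)
  rcases hidx.eq_one_or_self_of_dvd _ (relIndex_dvd_of_le_left Y hNK) with h | h
  · exact h
  · have hNK' : N.relIndex K = 1 := by
      have := relIndex_mul_relIndex N K Y hNK hKY
      rw [h] at this
      exact (Nat.mul_eq_right hidx.ne_zero).mp this
    exact absurd (relIndex_eq_one.mp hNK' (le_sup_right (a := N) (mem_zpowers y))) hyN

theorem centralizer_eq_centralizer_singleton_of_relIndex_prime {N Y : Subgroup G}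
    (hNc : N ≤ center G) (hNY : N ≤ Y) (hidx : (N.relIndex Y).Prime) {y : G} (hy : y ∈ Y)
    (hyN : y ∉ N) : centralizer (Y : Set G) = centralizer {y} := by
  refine le_antisymm (centralizer_le (by simpa using hy)) fun g hg => ?_
  suffices N ⊔ zpowers y ≤ centralizer {g} by
    rw [← sup_zpowers_eq_of_relIndex_prime hNY hidx hy hyN]
    exact mem_centralizer_iff.mpr fun h hh => mem_centralizer_singleton_iff.mp (this hh)
  exact sup_le (hNc.trans (center_le_centralizer _)) (zpowers_le.mpr
    (mem_centralizer_singleton_iff.mpr (mem_centralizer_singleton_iff.mp hg).symm))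

theorem le_centralizer_self_of_relIndex_prime {N Y : Subgroup G} (hNc : N ≤ center G)
    (hNY : N ≤ Y) (hidx : (N.relIndex Y).Prime) : Y ≤ centralizer (Y : Set G) := by
  obtain ⟨y, hy, hyN⟩ := SetLike.not_le_iff_exists.mp fun h => hidx.ne_one (relIndex_eq_one.mpr h)
  rw [centralizer_eq_centralizer_singleton_of_relIndex_prime hNc hNY hidx hy hyN,
    ← sup_zpowers_eq_of_relIndex_prime hNY hidx hy hyN]
  exact sup_le (hNc.trans (center_le_centralizer _))
    (zpowers_le.mpr (mem_centralizer_singleton_iff.mpr rfl))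

theorem commutator_eq_one_iff_mem_centralizer {g y : G} :
    g⁻¹ * y⁻¹ * g * y = 1 ↔ g ∈ centralizer {y} := by
  rw [mem_centralizer_singleton_iff, show g⁻¹ * y⁻¹ * g * y = (y * g)⁻¹ * (g * y) by group,
    inv_mul_eq_one, eq_comm]

theorem commutator_pow_right_of_mem_center {g y : G} (h : g⁻¹ * y⁻¹ * g * y ∈ center G)
    (n : ℕ) : g⁻¹ * (y ^ n)⁻¹ * g * y ^ n = (g⁻¹ * y⁻¹ * g * y) ^ n := by
  induction n with
  | zero => simp
  | succ n ih =>
    have hcomm := mem_center_iff.mp (pow_mem h n) y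
    calc g⁻¹ * (y ^ (n + 1))⁻¹ * g * y ^ (n + 1)
        = g⁻¹ * y⁻¹ * g * (g⁻¹ * (y ^ n)⁻¹ * g * y ^ n) * y := by group
      _ = g⁻¹ * y⁻¹ * g * (y * (g⁻¹ * y⁻¹ * g * y) ^ n) := by rw [ih, mul_assoc, hcomm]
      _ = (g⁻¹ * y⁻¹ * g * y) ^ (n + 1) := by rw [pow_succ', ← mul_assoc]

def centralCommutatorHom (y : G) (hy : ∀ g : G, g⁻¹ * y⁻¹ * g * y ∈ center G) :
    G →* center G where
  toFun g := ⟨g⁻¹ * y⁻¹ * g * y, hy g⟩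
  map_one' := Subtype.ext (by simp)
  map_mul' a b := Subtype.ext <| by
    have hcomm := mem_center_iff.mp (hy a) b⁻¹
    calc (a * b)⁻¹ * y⁻¹ * (a * b) * y = b⁻¹ * (a⁻¹ * y⁻¹ * a * y) * (y⁻¹ * b * y) := by group
      _ = a⁻¹ * y⁻¹ * a * y * (b⁻¹ * y⁻¹ * b * y) := by rw [hcomm]; group

theorem ker_centralCommutatorHom (y : G) (hy : ∀ g : G, g⁻¹ * y⁻¹ * g * y ∈ center G) :
    (centralCommutatorHom y hy).ker = centralizer {y} := by
  ext g
  rw [MonoidHom.mem_ker, ← commutator_eq_one_iff_mem_centralizer]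
  exact Subtype.ext_iff

theorem MonoidHom.card_range_eq_prime_of_isCyclic {p : ℕ} (hp : p.Prime) {H : Type*} [Group H]
    [IsCyclic H] (f : G →* H) (hpow : ∀ g, f g ^ p = 1) (hf : f ≠ 1) : Nat.card f.range = p := by
  have hexp : Monoid.exponent f.range ∣ p :=
    Monoid.exponent_dvd_of_forall_pow_eq_one fun ⟨_, g, hg⟩ => Subtype.ext (hg ▸ hpow g)
  rw [IsCyclic.exponent_eq_card] at hexp
  rcases hp.eq_one_or_self_of_dvd _ hexp with h | h
  · exact absurd (f.range_eq_bot_iff.mp (card_eq_one.mp h)) hf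
  · exact h

end

theorem stmt13_general {p : ℕ} (hp : p.Prime) (G : Type*) [Group G] [Finite G]
    (hG : IsPGroup p G) (hcyc : IsCyclic ↥(Subgroup.center G))
    (Y : Subgroup G) (hY : Y.Normal) (hZY : Subgroup.center G < Y)
    (hidx : (Subgroup.center G).relIndex Y = p) :
    (∀ a b : G, a ∈ Y → b ∈ Y → a * b = b * a) ∧
    (Subgroup.centralizer (Y : Set G)).Normal ∧
    (Subgroup.centralizer (Y : Set G)).index = p ∧
    ∀ g : G, g ∉ Subgroup.centralizer (Y : Set G) →
      ∀ y ∈ Y, y ∉ Subgroup.center G →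
        g⁻¹ * y⁻¹ * g * y ≠ 1 ∧ g⁻¹ * y⁻¹ * g * y ∈ Subgroup.center G ∧
          (g⁻¹ * y⁻¹ * g * y) ^ p = 1 := by
  have := Fact.mk hp
  have := hY
  have hidx' : ((center G).relIndex Y).Prime := hidx ▸ hp
  have hcomm (g : G) {y : G} (hy : y ∈ Y) : g⁻¹ * y⁻¹ * g * y ∈ center G :=
    hG.commutator_mem_of_relIndex_eq_prime hZY.le hidx g hy
  have hpow (g : G) {y : G} (hy : y ∈ Y) : (g⁻¹ * y⁻¹ * g * y) ^ p = 1 := by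
    rw [← commutator_pow_right_of_mem_center (hcomm g hy), ← hidx,
      commutator_eq_one_iff_mem_centralizer, mem_centralizer_singleton_iff]
    exact mem_center_iff.mp (pow_relIndex_mem _ hy) g
  have hH {y : G} (hy : y ∈ Y) (hyZ : y ∉ center G) :
      centralizer (Y : Set G) = centralizer {y} :=
    centralizer_eq_centralizer_singleton_of_relIndex_prime le_rfl hZY.le hidx' hy hyZ
  obtain ⟨y₀, hy₀, hy₀Z⟩ := SetLike.exists_of_lt hZY
  refine ⟨fun a b ha hb => mem_centralizer_iff.mp
      (le_centralizer_self_of_relIndex_prime le_rfl hZY.le hidx' hb) a ha,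
    inferInstance, ?_, fun g hg y hy hyZ => ?_⟩
  · have hker := ker_centralCommutatorHom y₀ (hcomm · hy₀)
    rw [hH hy₀ hy₀Z, ← hker, index_ker]
    refine MonoidHom.card_range_eq_prime_of_isCyclic hp _ (fun g => Subtype.ext (hpow g hy₀))
      fun h => hy₀Z ?_
    rw [h, MonoidHom.ker_one] at hker
    exact centralizer_eq_top_iff_subset.mp hker.symm (Set.mem_singleton y₀)
  · rw [hH hy hyZ, ← commutator_eq_one_iff_mem_centralizer] at hg
    exact ⟨hg, hcomm g hy, hpow g hy⟩

/-- Fact 3.1: if G is a finite p-group with cyclic proper center Z and Y ⊴ G with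
Z < Y and |Y:Z| = p, then Y is abelian, H = C_G(Y) is normal of index p in G, and
for g ∈ G \ H and y ∈ Y \ Z the commutator [g,y] = g⁻¹y⁻¹gy is a nontrivial
element of the unique subgroup of order p of Z (i.e. a nontrivial central element
whose p-th power is 1). -/
theorem stmt13 {p : ℕ} (hp : p.Prime) (G : Type*) [Group G] [Finite G]
    (hG : IsPGroup p G) (hcyc : IsCyclic ↥(Subgroup.center G))
    (hproper : Subgroup.center G ≠ ⊤)
    (Y : Subgroup G) (hY : Y.Normal) (hZY : Subgroup.center G < Y)
    (hidx : (Subgroup.center G).relIndex Y = p) :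
    (∀ a b : G, a ∈ Y → b ∈ Y → a * b = b * a) ∧
    (Subgroup.centralizer (Y : Set G)).Normal ∧
    (Subgroup.centralizer (Y : Set G)).index = p ∧
    ∀ g : G, g ∉ Subgroup.centralizer (Y : Set G) →
      ∀ y ∈ Y, y ∉ Subgroup.center G →
        g⁻¹ * y⁻¹ * g * y ≠ 1 ∧ g⁻¹ * y⁻¹ * g * y ∈ Subgroup.center G ∧
          (g⁻¹ * y⁻¹ * g * y) ^ p = 1 :=
  stmt13_general hp G hG hcyc Y hY hZY hidx
end

section
/- Let p be a prime, G a finite p-group with cyclic center Z = Z(G), and let Y be an abelian normal subgroup of G with Z < Y and |Y : Z| = p. Let χ be a faithful irreducible complex character of G and let λ be the unique (necessarily faithful) linear character of Z with χ restricted to Z equal to χ(1)·λ. Then the set Lin(Y | λ) of linear characters of Y extending λ has exactly p elements, these form a single orbit under the conjugation action of G, and the restriction of χ to Y equals (χ(1)/p) · Σ_{ρ ∈ Lin(Y | λ)} ρ. -/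
open scoped ComplexOrder

/-!
Let `V` afford `χ`. For a linear character `ρ` of `Y`, `P ρ = |Y|⁻¹ ∑ ρ(y)⁻¹ V(y)` projects onto
the `ρ`-isotypic part of `V`; these are orthogonal idempotents and `V(g) P ρ V(g)⁻¹ = P (g • ρ)`.
As `Y/Z` is cyclic and `Z` acts by the scalar `λ`, an eigenvector of a generator of `Y` mod `Z`
is a joint eigenvector of `Y`, which gives `ρ₀ ∈ Lin(Y | λ)` with `P ρ₀ ≠ 0`. Irreducibility of
`V` (Clifford) makes the `P σ`, for `σ` in the `G`-orbit `O` of `ρ₀`, sum to `1`, and they all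
have the same trace; hence `χ|_Y = (χ(1) / |O|) ∑_{σ ∈ O} σ`. An element of `Lin(Y | λ)` is
determined by its value at the generator, a `p`-th root of a fixed number, so
`|O| ≤ |Lin(Y | λ)| ≤ p`. Finally `|O|` is a power of `p`, and `|O| = 1` would make `Y` act by
scalars, hence be central since `χ` is faithful. So `|O| = p` and `O = Lin(Y | λ)`.
-/

namespace Subgroup

variable {K : Type*} [Group K] (N : Subgroup K) [N.Normal] [Finite (K ⧸ N)] [IsCyclic (K ⧸ N)]

lemma exists_forall_eq_mul_pow : ∃ t : K, ∀ y : K, ∃ z ∈ N, ∃ n : ℕ, y = z * t ^ n := by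
  obtain ⟨x, hx⟩ := IsCyclic.exists_monoid_generator (α := K ⧸ N)
  obtain ⟨t, rfl⟩ := QuotientGroup.mk_surjective x
  refine ⟨t, fun y => ?_⟩
  obtain ⟨n, hn⟩ := Submonoid.mem_powers_iff _ _ |>.mp (hx y)
  refine ⟨y * (t ^ n)⁻¹, ?_, n, by group⟩
  rw [← QuotientGroup.eq_one_iff, QuotientGroup.mk_mul, QuotientGroup.mk_inv,
    QuotientGroup.mk_pow, hn, mul_inv_cancel]

lemma encard_setOf_forall_eq_le {k : Type*} [Field k] (μ : N → k) :
    {ρ : K →* k | ∀ z : N, ρ z = μ z}.encard ≤ N.index := by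
  classical
  obtain ⟨t, ht⟩ := N.exists_forall_eq_mul_pow
  have htN : t ^ N.index ∈ N := by
    rw [← QuotientGroup.eq_one_iff, QuotientGroup.mk_pow]
    exact pow_card_eq_one'
  have hpos : 0 < N.index := Nat.pos_of_ne_zero N.index_ne_zero_of_finite
  let roots := (Polynomial.nthRoots N.index (μ ⟨_, htN⟩)).toFinset
  have hmaps : Set.MapsTo (fun ρ : K →* k => ρ t) {ρ | ∀ z : N, ρ z = μ z} roots := by
    intro ρ hρ
    simp only [roots, Finset.mem_coe, Multiset.mem_toFinset, Polynomial.mem_nthRoots hpos,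
      ← map_pow]
    exact hρ ⟨_, htN⟩
  have hinj : Set.InjOn (fun ρ : K →* k => ρ t) {ρ | ∀ z : N, ρ z = μ z} := by
    intro ρ hρ ρ' hρ' heq
    ext y
    obtain ⟨z, hz, n, rfl⟩ := ht y
    simp only [map_mul, map_pow]
    rw [hρ ⟨z, hz⟩, hρ' ⟨z, hz⟩, show ρ t = ρ' t from heq]
  calc _ ≤ (roots : Set k).encard := Set.encard_le_encard_of_injOn hmaps hinj
    _ = roots.card := Set.encard_coe_eq_coe_finsetCard roots
    _ ≤ N.index := by
      exact_mod_cast (Multiset.toFinset_card_le _).trans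
        (Polynomial.card_nthRoots N.index (μ ⟨_, htN⟩))

lemma encard_setOf_forall_eq_le_relIndex {G k : Type*} [Group G] [Field k] {H Y : Subgroup G}
    (hHY : H ≤ Y) [H.Normal] [Finite (Y ⧸ H.subgroupOf Y)] [IsCyclic (Y ⧸ H.subgroupOf Y)]
    (μ : H → k) :
    {ρ : Y →* k | ∀ (z : G) (hz : z ∈ H), ρ ⟨z, hHY hz⟩ = μ ⟨z, hz⟩}.encard ≤ H.relIndex Y := by
  refine le_trans (Set.encard_le_encard ?_)
    ((H.subgroupOf Y).encard_setOf_forall_eq_le fun z => μ ⟨z, z.2⟩)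
  exact fun _ hρ z => hρ _ z.2

end Subgroup

namespace Representation

section Projection

variable {k G W : Type*} [Field k] [Group G] [AddCommGroup W] [Module k W]
  {Y : Subgroup G} [Fintype Y]

variable (π : Representation k G W) in
noncomputable def isotypicProj (ρ : Y →* k) : Module.End k W :=
  (Fintype.card Y : k)⁻¹ • ∑ y : Y, (ρ y)⁻¹ • π y

variable {π : Representation k G W}

lemma apply_coe_mul_isotypicProj (ρ : Y →* k) (y : Y) :
    π y * π.isotypicProj ρ = ρ y • π.isotypicProj ρ := by
  have hρ : ρ y ≠ 0 := ((Group.isUnit y).map ρ).ne_zero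
  have hsum : π y * ∑ u : Y, (ρ u)⁻¹ • π u = ρ y • ∑ u : Y, (ρ u)⁻¹ • π u := by
    rw [Finset.mul_sum, Finset.smul_sum]
    refine Fintype.sum_equiv (Equiv.mulLeft y) _ _ fun u => ?_
    rw [Equiv.coe_mulLeft, mul_smul_comm, ← map_mul, smul_smul, map_mul ρ, Subgroup.coe_mul]
    field_simp
  rw [isotypicProj, mul_smul_comm, hsum, smul_comm]

lemma isotypicProj_mul_isotypicProj (ρ ρ' : Y →* k) :
    π.isotypicProj ρ * π.isotypicProj ρ' =
      ((Fintype.card Y : k)⁻¹ * ∑ y : Y, (ρ y)⁻¹ * ρ' y) • π.isotypicProj ρ' := by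
  rw [isotypicProj, smul_mul_assoc, Finset.sum_mul]
  simp only [smul_mul_assoc, apply_coe_mul_isotypicProj, smul_smul, ← Finset.sum_smul]

lemma isotypicProj_mul_of_ne {ρ ρ' : Y →* k} (hne : ρ ≠ ρ') :
    π.isotypicProj ρ * π.isotypicProj ρ' = 0 := by
  let ratio : Y →* k := (Units.coeHom k).comp (ρ'.toHomUnits / ρ.toHomUnits)
  have hratio : ratio ≠ 1 := fun h1 => hne <| MonoidHom.ext fun y => by
    have := DFunLike.congr_fun h1 y
    simp only [ratio, MonoidHom.comp_apply, MonoidHom.div_apply, Units.coeHom_apply,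
      Units.val_div_eq_div_val, MonoidHom.coe_toHomUnits, MonoidHom.one_apply] at this
    exact ((div_eq_one_iff_eq ((Group.isUnit y).map ρ).ne_zero).mp this).symm
  have hsum : ∑ y : Y, (ρ y)⁻¹ * ρ' y = 0 := by
    simpa [ratio, div_eq_inv_mul] using sum_hom_units_eq_zero ratio hratio
  rw [isotypicProj_mul_isotypicProj, hsum, mul_zero, zero_smul]

variable [CharZero k]

lemma isotypicProj_mul_self (ρ : Y →* k) :
    π.isotypicProj ρ * π.isotypicProj ρ = π.isotypicProj ρ := by
  have hρ : ∀ y, ρ y ≠ 0 := fun y => ((Group.isUnit y).map ρ).ne_zero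
  simp [isotypicProj_mul_isotypicProj, hρ]

lemma isotypicProj_apply_of_forall {ρ : Y →* k} {v : W} (hv : ∀ y : Y, π y v = ρ y • v) :
    π.isotypicProj ρ v = v := by
  have hρ : ∀ y, ρ y ≠ 0 := fun y => ((Group.isUnit y).map ρ).ne_zero
  simp [isotypicProj, hv, smul_smul, hρ, ← Nat.cast_smul_eq_nsmul k]

end Projection

lemma exists_monoidHom_forall_apply_eq_smul {k M W : Type*} [Field k] [Monoid M] [AddCommGroup W]
    [Module k W] (π : Representation k M W) {v : W} (hv : v ≠ 0)
    (h : ∀ m, ∃ c : k, π m v = c • v) : ∃ ρ : M →* k, ∀ m, π m v = ρ m • v := by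
  choose c hc using h
  have hinj : ∀ a b : k, a • v = b • v → a = b := fun a b h => smul_left_injective k hv h
  refine ⟨{ toFun := c, map_one' := ?_, map_mul' := fun a b => ?_ }, hc⟩
  · exact hinj _ _ (by rw [← hc, map_one, Module.End.one_apply, one_smul])
  · exact hinj _ _ (by rw [← hc, map_mul, Module.End.mul_apply, hc, map_smul, hc, smul_smul,
      mul_comm])

lemma exists_forall_apply_eq_smul {k K W : Type*} [Field k] [IsAlgClosed k]
    [Group K] [AddCommGroup W] [Module k W] [FiniteDimensional k W] [Nontrivial W]
    (π : Representation k K W) (N : Subgroup K) [N.Normal] [Finite (K ⧸ N)] [IsCyclic (K ⧸ N)]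
    (hN : ∀ z ∈ N, ∃ c : k, π z = c • 1) :
    ∃ (ρ : K →* k) (v : W), v ≠ 0 ∧ ∀ y, π y v = ρ y • v := by
  obtain ⟨t, ht⟩ := N.exists_forall_eq_mul_pow
  obtain ⟨μ, hμ⟩ := Module.End.exists_eigenvalue (π t)
  obtain ⟨v, hv⟩ := hμ.exists_hasEigenvector
  refine ⟨_, v, hv.2, (π.exists_monoidHom_forall_apply_eq_smul hv.2 fun y => ?_).choose_spec⟩
  obtain ⟨z, hz, n, rfl⟩ := ht y
  obtain ⟨c, hc⟩ := hN z hz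
  refine ⟨c * μ ^ n, ?_⟩
  rw [map_mul, map_pow, Module.End.mul_apply, hv.pow_apply, hc, LinearMap.smul_apply,
    Module.End.one_apply, smul_smul]

end Representation

namespace MonoidHom

variable {G M : Type*} [Group G] [Monoid M] {Y : Subgroup G} [Y.Normal]

-- A left action: `(g • ρ) y = ρ (g⁻¹ y g)`, so the paper's `ρ^g` is `g⁻¹ • ρ`.
instance conjSMul : SMul G (Y →* M) :=
  ⟨fun g ρ => ρ.comp (MulAut.conjNormal g⁻¹).toMonoidHom⟩

lemma conj_smul_apply (g : G) (ρ : Y →* M) (y : Y) :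
    (g • ρ) y = ρ (MulAut.conjNormal g⁻¹ y) := rfl

instance conjMulAction : MulAction G (Y →* M) where
  one_smul ρ := by ext; simp [conj_smul_apply]
  mul_smul g h ρ := by ext; simp [conj_smul_apply, MulAut.mul_apply]

lemma inv_smul_apply (g : G) (ρ : Y →* M) (y : Y) :
    (g⁻¹ • ρ) y = ρ ⟨g * y * g⁻¹, Subgroup.Normal.conj_mem inferInstance (y : G) y.2 g⟩ := by
  rw [conj_smul_apply, inv_inv]
  rfl

lemma conj_smul_apply_of_mem_center (g : G) (ρ : Y →* M) {y : Y}
    (hy : (y : G) ∈ Subgroup.center G) : (g • ρ) y = ρ y := by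
  rw [conj_smul_apply]
  congr 1
  ext
  rw [MulAut.conjNormal_apply, Subgroup.mem_center_iff.mp hy g⁻¹, mul_inv_cancel_right]

end MonoidHom

namespace Representation

variable {k G W : Type*} [Field k] [Group G] [AddCommGroup W] [Module k W]
  {π : Representation k G W} {Y : Subgroup G} [Y.Normal] [Fintype Y]

lemma apply_mul_isotypicProj_mul_apply_inv (g : G) (ρ : Y →* k) :
    π g * π.isotypicProj ρ * π g⁻¹ = π.isotypicProj (g • ρ) := by
  simp only [isotypicProj, mul_smul_comm, smul_mul_assoc, Finset.mul_sum, Finset.sum_mul]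
  congr 1
  refine Fintype.sum_equiv (MulAut.conjNormal g).toEquiv _ _ fun y => ?_
  have hy : MulAut.conjNormal g⁻¹ (MulAut.conjNormal g y) = y := by ext; simp
  simp only [MulEquiv.toEquiv_eq_coe, MulEquiv.coe_toEquiv, MonoidHom.conj_smul_apply, hy,
    MulAut.conjNormal_apply, map_mul]

lemma apply_mul_isotypicProj (g : G) (ρ : Y →* k) :
    π g * π.isotypicProj ρ = π.isotypicProj (g • ρ) * π g := by
  rw [← apply_mul_isotypicProj_mul_apply_inv, mul_assoc, ← map_mul, inv_mul_cancel, map_one,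
    mul_one]

lemma trace_isotypicProj_smul [FiniteDimensional k W] (g : G) (ρ : Y →* k) :
    LinearMap.trace k W (π.isotypicProj (g • ρ)) = LinearMap.trace k W (π.isotypicProj ρ) := by
  rw [← apply_mul_isotypicProj_mul_apply_inv, LinearMap.trace_mul_cycle, ← map_mul,
    inv_mul_cancel, map_one, one_mul]

lemma le_center_of_isotypicProj_eq_one (hinj : Function.Injective π) {ρ : Y →* k}
    (hfix : ∀ g : G, g • ρ = ρ) (hone : π.isotypicProj ρ = 1) :
    Y ≤ Subgroup.center G := by
  have hscalar : ∀ y : Y, π y = ρ y • 1 := fun y => by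
    simpa [hone] using apply_coe_mul_isotypicProj (π := π) ρ y
  intro y hy
  rw [Subgroup.mem_center_iff]
  intro g
  have hconj : π (g * y * g⁻¹) = π y := by
    have hρ := DFunLike.congr_fun (hfix g⁻¹) ⟨y, hy⟩
    rw [MonoidHom.conj_smul_apply, inv_inv] at hρ
    rw [← MulAut.conjNormal_apply g ⟨y, hy⟩, hscalar, hρ]
    exact (hscalar ⟨y, hy⟩).symm
  exact mul_inv_eq_iff_eq_mul.mp (hinj hconj)

lemma trace_apply_eq_trace_isotypicProj_mul_sum [FiniteDimensional k W] {s : Finset (Y →* k)}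
    {ρ : Y →* k} (hs : ∀ σ ∈ s, ∃ g : G, σ = g • ρ) (hsum : ∑ σ ∈ s, π.isotypicProj σ = 1) (y : Y) :
    LinearMap.trace k W (π y) = LinearMap.trace k W (π.isotypicProj ρ) * ∑ σ ∈ s, σ y := by
  have hy : π y = ∑ σ ∈ s, σ y • π.isotypicProj σ := by
    rw [← mul_one (π y), ← hsum, Finset.mul_sum]
    exact Finset.sum_congr rfl fun σ _ => apply_coe_mul_isotypicProj σ y
  rw [hy, map_sum, Finset.mul_sum]
  refine Finset.sum_congr rfl fun σ hσ => ?_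
  obtain ⟨g, rfl⟩ := hs σ hσ
  rw [map_smul, trace_isotypicProj_smul, smul_eq_mul, mul_comm]

end Representation

namespace FDRep

open CategoryTheory Representation

variable {G : Type} [Group G] (V : FDRep ℂ G)

lemma injective_of_isFaithfulChar (hV : IsFaithfulChar G V.character) : Function.Injective V.ρ :=
  (injective_iff_map_eq_one V.ρ).mpr fun g hg =>
    hV g (by rw [char_one, character, hg, LinearMap.trace_one])

variable [Simple V]

lemma eq_top_of_forall_apply_mem (U : Submodule ℂ V) (hU : ∀ g : G, ∀ x ∈ U, V.ρ g x ∈ U)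
    (hne : U ≠ ⊥) : U = ⊤ := by
  let ρU : Representation ℂ G U :=
    { toFun := fun g => (V.ρ g).restrict (hU g)
      map_one' := by ext x; simp [LinearMap.restrict_apply]
      map_mul' := by intro g h; ext x; simp [LinearMap.restrict_apply] }
  let ι : FDRep.of ρU ⟶ V := ⟨FGModuleCat.ofHom U.subtype, fun g => rfl⟩
  have hι : ι.hom.hom.hom = U.subtype := rfl
  have : Mono ι := by
    refine ⟨fun f f' H => ?_⟩
    ext x
    exact congrArg (fun k => k.hom.hom x) (congrArg Action.Hom.hom H)
  have hι0 : ι ≠ 0 := by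
    obtain ⟨x, hxU, hx0⟩ := Submodule.exists_mem_ne_zero_of_ne_bot hne
    intro h0
    have := congrArg (fun k => k.hom.hom.hom) h0
    rw [hι] at this
    exact hx0 (by simpa using LinearMap.congr_fun this ⟨x, hxU⟩)
  have : IsIso ι := (Simple.mono_isIso_iff_nonzero ι).mpr hι0
  rw [Submodule.eq_top_iff']
  intro v
  have hv : ι.hom.hom.hom ((inv ι).hom.hom.hom v) = v :=
    congrArg (fun k => k.hom.hom v) (congrArg Action.Hom.hom (IsIso.inv_hom_id ι))
  rw [hι] at hv
  rw [← hv]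
  exact ((inv ι).hom.hom.hom v).2

lemma nontrivial_of_simple : Nontrivial V := by
  by_contra h
  rw [not_nontrivial_iff_subsingleton] at h
  exact id_nonzero V (Action.Hom.ext (FGModuleCat.hom_ext (LinearMap.ext fun _ => h.elim _ _)))

lemma eq_zero_of_forall_mul_apply_mul_eq_zero {A B : Module.End ℂ V} (hA : A ≠ 0)
    (h : ∀ g : G, B * V.ρ g * A = 0) : B = 0 := by
  let U : Submodule ℂ V := ⨆ g : G, LinearMap.range (V.ρ g * A)
  have hU : ∀ h : G, ∀ x ∈ U, V.ρ h x ∈ U := by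
    intro h x hx
    induction hx using Submodule.iSup_induction' with
    | mem g x hx =>
      obtain ⟨w, rfl⟩ := hx
      refine Submodule.mem_iSup_of_mem (h * g) ⟨w, ?_⟩
      rw [map_mul, Module.End.mul_apply, Module.End.mul_apply, Module.End.mul_apply]
    | zero => simp
    | add x y _ _ hx hy => rw [map_add]; exact U.add_mem hx hy
  have hne : U ≠ ⊥ := by
    obtain ⟨w, hw⟩ := DFunLike.ne_iff.mp hA
    refine (Submodule.ne_bot_iff U).mpr ⟨A w, Submodule.mem_iSup_of_mem 1 ⟨w, by simp⟩, hw⟩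
  have hker : U ≤ LinearMap.ker B :=
    iSup_le fun g => LinearMap.range_le_ker_iff.mpr <| by
      rw [← Module.End.mul_eq_comp, ← mul_assoc, h]
  exact LinearMap.ker_eq_top.mp (top_le_iff.mp (eq_top_of_forall_apply_mem V U hU hne ▸ hker))

lemma exists_eq_smul_one_of_mem_center_s14 {z : G} (hz : z ∈ Subgroup.center G) :
    ∃ c : ℂ, V.ρ z = c • 1 := by
  have := nontrivial_of_simple V
  obtain ⟨c, hc⟩ := Module.End.exists_eigenvalue (V.ρ z)
  have hU : ∀ g : G, ∀ x ∈ Module.End.eigenspace (V.ρ z) c,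
      V.ρ g x ∈ Module.End.eigenspace (V.ρ z) c := by
    intro g x hx
    rw [Module.End.mem_eigenspace_iff] at hx ⊢
    rw [← Module.End.mul_apply, ← map_mul, hz.comm g, map_mul, Module.End.mul_apply, hx,
      map_smul]
  have htop := eq_top_of_forall_apply_mem V _ hU hc
  refine ⟨c, LinearMap.ext fun x => ?_⟩
  exact Module.End.mem_eigenspace_iff.mp (htop ▸ Submodule.mem_top :
    x ∈ Module.End.eigenspace (V.ρ z) c)

lemma apply_eq_smul_one_of_character_eq {lam : Subgroup.center G → ℂ}
    (hlam : ∀ z : Subgroup.center G, V.character z = V.character 1 * lam z)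
    (z : Subgroup.center G) : V.ρ z = lam z • 1 := by
  have := nontrivial_of_simple V
  obtain ⟨c, hc⟩ := V.exists_eq_smul_one_of_mem_center_s14 z.2
  have hd : (Module.finrank ℂ V : ℂ) ≠ 0 := Nat.cast_ne_zero.mpr Module.finrank_pos.ne'
  have hz := hlam z
  rw [character, hc, char_one, map_smul, LinearMap.trace_one, smul_eq_mul, mul_comm] at hz
  rw [hc, mul_left_cancel₀ hd hz]

variable {Y : Subgroup G} [Y.Normal] [Fintype Y]

lemma sum_isotypicProj_eq_one {s : Finset (Y →* ℂ)} {ρ : Y →* ℂ} (hρs : ρ ∈ s)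
    (hs : ∀ g : G, ∀ σ ∈ s, g • σ ∈ s) (hρ : isotypicProj V.ρ ρ ≠ 0) :
    ∑ σ ∈ s, isotypicProj V.ρ σ = 1 := by
  have hfix : ∀ τ ∈ s,
      (∑ σ ∈ s, isotypicProj V.ρ σ) * isotypicProj V.ρ τ = isotypicProj V.ρ τ := by
    intro τ hτ
    rw [Finset.sum_mul, Finset.sum_eq_single τ (fun σ _ hne => isotypicProj_mul_of_ne hne)
      (fun h => absurd hτ h), isotypicProj_mul_self]
  rw [← sub_eq_zero]
  refine eq_zero_of_forall_mul_apply_mul_eq_zero V hρ fun g => ?_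
  rw [mul_assoc, apply_mul_isotypicProj, ← mul_assoc, sub_mul, hfix _ (hs g ρ hρs), one_mul,
    sub_self, zero_mul]

variable [Finite G]

lemma character_apply_eq_div_mul_finsum {ρ : Y →* ℂ} (hρ : isotypicProj V.ρ ρ ≠ 0) (y : Y) :
    V.character y =
      V.character 1 / (MulAction.orbit G ρ).ncard * ∑ᶠ σ ∈ MulAction.orbit G ρ, σ y := by
  have hfin := Finite.finite_mulAction_orbit (M := G) ρ
  have hρs : ρ ∈ hfin.toFinset := hfin.mem_toFinset.mpr (MulAction.mem_orbit_self ρ)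
  have hstable : ∀ g : G, ∀ σ ∈ hfin.toFinset, g • σ ∈ hfin.toFinset := fun g σ hσ => by
    obtain ⟨h, rfl⟩ := hfin.mem_toFinset.mp hσ
    exact hfin.mem_toFinset.mpr ⟨g * h, mul_smul g h ρ⟩
  have hsum := sum_isotypicProj_eq_one V hρs hstable hρ
  have hs : ∀ σ ∈ hfin.toFinset, ∃ g : G, σ = g • ρ := fun σ hσ =>
    (hfin.mem_toFinset.mp hσ).imp fun _ => Eq.symm
  have hcard : (hfin.toFinset.card : ℂ) ≠ 0 :=
    Nat.cast_ne_zero.mpr (Finset.card_ne_zero_of_mem hρs)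
  have h1 := trace_apply_eq_trace_isotypicProj_mul_sum hs hsum 1
  simp only [OneMemClass.coe_one, map_one, Finset.sum_const, nsmul_eq_mul, mul_one] at h1
  rw [character, character, trace_apply_eq_trace_isotypicProj_mul_sum hs hsum y, map_one, h1,
    finsum_mem_eq_finite_toFinset_sum _ hfin, Set.ncard_eq_toFinset_card _ hfin]
  field_simp

lemma ncard_orbit_eq_of_encard_le {p : ℕ} [Fact p.Prime] (hG : IsPGroup p G)
    (hY : ¬ Y ≤ Subgroup.center G) (hinj : Function.Injective V.ρ) {ρ : Y →* ℂ}
    (hρ : isotypicProj V.ρ ρ ≠ 0)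
    (hle : (MulAction.orbit G ρ).encard ≤ p) : (MulAction.orbit G ρ).ncard = p := by
  have := (Finite.finite_mulAction_orbit (M := G) ρ).to_subtype
  obtain ⟨n, hn⟩ := hG.card_orbit ρ
  rw [Nat.card_coe_set_eq] at hn
  have hn0 : n ≠ 0 := by
    rintro rfl
    have hfix : ∀ g : G, g • ρ = ρ := fun g =>
      Set.ncard_le_one_iff_subsingleton.mp hn.le (MulAction.mem_orbit ρ g)
        (MulAction.mem_orbit_self ρ)
    have hone := sum_isotypicProj_eq_one V (Finset.mem_singleton_self ρ)
      (fun g σ hσ => by rw [Finset.mem_singleton.mp hσ, hfix, Finset.mem_singleton]) hρ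
    rw [Finset.sum_singleton] at hone
    exact hY (le_center_of_isotypicProj_eq_one hinj hfix hone)
  rw [hn]
  refine le_antisymm ?_ (Nat.le_self_pow hn0 p)
  rw [← hn]
  exact (Set.encard_le_coe_iff_finite_ncard_le.mp hle).2

end FDRep

theorem stmt14_general {p : ℕ} (hp : p.Prime) (G : Type) [Group G] [Fintype G]
    (hG : IsPGroup p G)
    (Y : Subgroup G) (hY : Y.Normal) (hZY : Subgroup.center G < Y)
    (hidx : (Subgroup.center G).relIndex Y = p)
    (χ : G → ℂ) (hχ : IsIrrChar G χ) (hf : IsFaithfulChar G χ)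
    (lam : ↥(Subgroup.center G) →* ℂ)
    (hlam : ∀ z : ↥(Subgroup.center G), χ ↑z = χ 1 * lam z) :
    let L : Set (↥Y →* ℂ) :=
      {ρ | ∀ (z : G) (hz : z ∈ Subgroup.center G), ρ ⟨z, hZY.le hz⟩ = lam ⟨z, hz⟩}
    L.ncard = p ∧
    (∀ ρ ∈ L, ∀ g : G, ∃ σ ∈ L, ∀ y : ↥Y,
        σ y = ρ ⟨g * ↑y * g⁻¹, hY.conj_mem ↑y y.2 g⟩) ∧
    (∀ ρ ∈ L, ∀ σ ∈ L, ∃ g : G, ∀ y : ↥Y,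
        σ y = ρ ⟨g * ↑y * g⁻¹, hY.conj_mem ↑y y.2 g⟩) ∧
    (∀ y : ↥Y, χ ↑y = χ 1 / (p : ℂ) * ∑ᶠ ρ ∈ L, ρ y) := by
  intro L
  obtain ⟨V, _, rfl⟩ := hχ
  have : Fact p.Prime := ⟨hp⟩
  have : Fintype Y := Fintype.ofFinite Y
  have : IsCyclic (Y ⧸ (Subgroup.center G).subgroupOf Y) := isCyclic_of_prime_card hidx
  have := FDRep.nontrivial_of_simple V
  have hcent := V.apply_eq_smul_one_of_character_eq hlam
  obtain ⟨ρ₀, v, hv0, hv⟩ := Representation.exists_forall_apply_eq_smul (V.ρ.comp Y.subtype)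
    ((Subgroup.center G).subgroupOf Y) fun z hz => ⟨_, hcent ⟨z, hz⟩⟩
  have hρ₀ : Representation.isotypicProj V.ρ ρ₀ ≠ 0 := fun h =>
    hv0 (by simpa [h] using (Representation.isotypicProj_apply_of_forall (π := V.ρ) hv).symm)
  have hρ₀L : ρ₀ ∈ L := fun z hz => smul_left_injective ℂ hv0 <| by
    simp only [← hv, MonoidHom.comp_apply, Subgroup.coe_subtype, hcent ⟨z, hz⟩]
    rfl
  have hOL : MulAction.orbit G ρ₀ ⊆ L := by
    rintro _ ⟨g, rfl⟩ z hz
    exact (MonoidHom.conj_smul_apply_of_mem_center g ρ₀ hz).trans (hρ₀L z hz)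
  have hLp : L.encard ≤ p := hidx ▸ Subgroup.encard_setOf_forall_eq_le_relIndex hZY.le lam
  have hOp := V.ncard_orbit_eq_of_encard_le hG hZY.not_ge (V.injective_of_isFaithfulChar hf) hρ₀
    ((Set.encard_le_encard hOL).trans hLp)
  have hOeq : MulAction.orbit G ρ₀ = L := Set.eq_of_subset_of_ncard_le hOL
    (hOp ▸ (Set.encard_le_coe_iff_finite_ncard_le.mp hLp).2) (Set.finite_of_encard_le_coe hLp)
  rw [← hOeq]
  refine ⟨hOp, fun ρ hρ g => ?_, fun ρ hρ σ hσ => ?_, fun y => ?_⟩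
  · obtain ⟨h, rfl⟩ := hρ
    exact ⟨g⁻¹ • h • ρ₀, ⟨g⁻¹ * h, mul_smul _ _ _⟩, MonoidHom.inv_smul_apply g _⟩
  · obtain ⟨h, rfl⟩ := MulAction.orbit_eq_iff.mpr hρ ▸ hσ
    exact ⟨h⁻¹, MonoidHom.conj_smul_apply h ρ⟩
  · rw [V.character_apply_eq_div_mul_finsum hρ₀, hOp]

/-- For a finite p-group G with cyclic center Z, an abelian normal subgroup Y with
Z < Y and |Y:Z| = p, a faithful irreducible character χ with central character λ:
the set Lin(Y | λ) of linear characters of Y extending λ has exactly p elements,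
is a single G-conjugacy orbit, and χ restricted to Y is (χ(1)/p) times its sum. -/
theorem stmt14 {p : ℕ} (hp : p.Prime) (G : Type) [Group G] [Fintype G]
    (hG : IsPGroup p G) (hcyc : IsCyclic ↥(Subgroup.center G))
    (Y : Subgroup G) (hY : Y.Normal) (hZY : Subgroup.center G < Y)
    (hab : ∀ a b : G, a ∈ Y → b ∈ Y → a * b = b * a)
    (hidx : (Subgroup.center G).relIndex Y = p)
    (χ : G → ℂ) (hχ : IsIrrChar G χ) (hf : IsFaithfulChar G χ)
    (lam : ↥(Subgroup.center G) →* ℂ)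
    (hlam : ∀ z : ↥(Subgroup.center G), χ ↑z = χ 1 * lam z) :
    let L : Set (↥Y →* ℂ) :=
      {ρ | ∀ (z : G) (hz : z ∈ Subgroup.center G), ρ ⟨z, hZY.le hz⟩ = lam ⟨z, hz⟩}
    L.ncard = p ∧
    (∀ ρ ∈ L, ∀ g : G, ∃ σ ∈ L, ∀ y : ↥Y,
        σ y = ρ ⟨g * ↑y * g⁻¹, hY.conj_mem ↑y y.2 g⟩) ∧
    (∀ ρ ∈ L, ∀ σ ∈ L, ∃ g : G, ∀ y : ↥Y,
        σ y = ρ ⟨g * ↑y * g⁻¹, hY.conj_mem ↑y y.2 g⟩) ∧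
    (∀ y : ↥Y, χ ↑y = χ 1 / (p : ℂ) * ∑ᶠ ρ ∈ L, ρ y) :=
  stmt14_general hp G hG Y hY hZY hidx χ hχ hf lam hlam
end

section
/- Let G be a finite group such that the index |G : Z(G)| is not a perfect square. Then no irreducible complex character χ of G vanishes on all of G \ Z(G); that is, for every irreducible character χ of G there exists g ∈ G with g ∉ Z(G) and χ(g) ≠ 0. -/
open scoped ComplexOrder

/-!
By Schur's lemma a central element `z` acts on a simple module `V` of dimension `n` as a scalar,
so `χ(z) χ(z⁻¹) = n²`. If `χ` vanishes off `Z(G)`, the first orthogonality relation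
`∑_g χ(g) χ(g⁻¹) = |G|` therefore reads `|Z(G)| n² = |G|`, i.e. `|G : Z(G)| = n²`.
-/

open CategoryTheory Module

universe u

namespace FDRep

variable {k G : Type u} [Field k] [IsAlgClosed k] [Group G]

theorem exists_ρ_eq_smul_id_of_mem_center (V : FDRep k G) [Simple V] {z : G}
    (hz : z ∈ Subgroup.center G) : ∃ c : k, V.ρ z = c • LinearMap.id := by
  let f : V ⟶ V := ⟨FGModuleCat.ofHom (V.ρ z), fun g => by
    ext x
    change (V.ρ z * V.ρ g) x = (V.ρ g * V.ρ z) x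
    rw [← map_mul, ← map_mul, hz.comm]⟩
  obtain ⟨c, hc⟩ := endomorphism_simple_eq_smul_id k f
  exact ⟨c, (congrArg (fun φ : V ⟶ V => φ.hom.hom.hom) hc).symm⟩

theorem character_mul_character_inv_of_mem_center (V : FDRep k G) [Simple V] {z : G}
    (hz : z ∈ Subgroup.center G) :
    V.character z * V.character z⁻¹ = (finrank k V : k) ^ 2 := by
  obtain ⟨c, hc⟩ := exists_ρ_eq_smul_id_of_mem_center V hz
  obtain ⟨c', hc'⟩ := exists_ρ_eq_smul_id_of_mem_center V (inv_mem hz)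
  have hprod : (c * c') • (LinearMap.id : V →ₗ[k] V) = LinearMap.id :=
    calc (c * c') • LinearMap.id = V.ρ z * V.ρ z⁻¹ := by
          rw [hc, hc', smul_mul_smul_comm, Module.End.mul_eq_comp, LinearMap.id_comp]
      _ = LinearMap.id := by rw [← map_mul, mul_inv_cancel, map_one]; rfl
  -- Taking traces gives `c c' n = n` without having to know that `n ≠ 0`.
  have htrace : c * c' * finrank k V = finrank k V := by
    simpa only [map_smul, LinearMap.trace_id, smul_eq_mul] using
      congrArg (LinearMap.trace k V) hprod
  change LinearMap.trace k V (V.ρ z) * LinearMap.trace k V (V.ρ z⁻¹) = _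
  rw [hc, hc', map_smul, map_smul, LinearMap.trace_id, smul_eq_mul, smul_eq_mul]
  linear_combination (finrank k V : k) * htrace

variable [Fintype G]

theorem sum_character_mul_character_inv [Invertible (Nat.card G : k)] (V : FDRep k G)
    [Simple V] : ∑ g : G, V.character g * V.character g⁻¹ = Nat.card G := by
  classical
  have h := char_orthonormal V V
  rw [if_pos ⟨Iso.refl V⟩, inv_mul_eq_one₀ (Invertible.ne_zero _)] at h
  exact h.symm

theorem card_eq_card_center_mul_finrank_sq [CharZero k] (V : FDRep k G) [Simple V]
    (hvan : ∀ g ∉ Subgroup.center G, V.character g = 0) :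
    Nat.card G = Nat.card (Subgroup.center G) * finrank k V ^ 2 := by
  classical
  have : Invertible (Nat.card G : k) := invertibleOfNonzero (Nat.cast_ne_zero.mpr Nat.card_pos.ne')
  have hterm (g : G) : V.character g * V.character g⁻¹ =
      if g ∈ Subgroup.center G then (finrank k V : k) ^ 2 else 0 := by
    split_ifs with hg
    · exact character_mul_character_inv_of_mem_center V hg
    · rw [hvan g hg, zero_mul]
  have hsum := sum_character_mul_character_inv V
  rw [Finset.sum_congr rfl fun g _ => hterm g, ← Finset.sum_filter, Finset.sum_const,
    nsmul_eq_mul, ← Fintype.card_subtype, ← Nat.card_eq_fintype_card] at hsum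
  exact_mod_cast hsum.symm

theorem index_center_eq_finrank_sq [CharZero k] (V : FDRep k G) [Simple V]
    (hvan : ∀ g ∉ Subgroup.center G, V.character g = 0) :
    (Subgroup.center G).index = finrank k V ^ 2 := by
  have hcard := (Subgroup.center G).index_mul_card
  rw [card_eq_card_center_mul_finrank_sq V hvan, mul_comm] at hcard
  exact Nat.eq_of_mul_eq_mul_left Nat.card_pos hcard

end FDRep

/-- If |G : Z(G)| is not a perfect square, then no irreducible character of G
vanishes identically outside the center. -/
theorem stmt17 (G : Type) [Group G] [Fintype G]
    (h : ¬ IsSquare (Subgroup.center G).index) :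
    ∀ χ : G → ℂ, IsIrrChar G χ → ∃ g : G, g ∉ Subgroup.center G ∧ χ g ≠ 0 := by
  rintro χ ⟨V, hV, rfl⟩
  by_contra! hvan
  exact h (FDRep.index_center_eq_finrank_sq V hvan ▸ IsSquare.sq _)
end
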